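/- Fix a real t with t ∉ {−1, 1}. Let L_j = ∫_{−1}^{1} ln|t − s|·P_j(s) ds and C_j = p.v.∫_{−1}^{1} P_j(s)/(t − s) ds with P_j the Legendre polynomial of degree j. Then 3·L_2 = t·(C_2 − C_0) + 2, and for every integer j > 2, (j+1)·L_j = −(j−2)·L_{j−2} + t·(C_j − C_{j−2}). -/

import Mathlib

/-!
Put `g = P_{n+2} - P_n`, so that `g' = (2n+3) P_{n+1}` and `g(±1) = 0`. Integrating the truncated
integral by parts against the continuous primitive `-log (max |t - s| ε) * g s` gives
`C_{n+2} - C_n = ∫ log|t - s| g'(s) ds` by dominated convergence. Multiplying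
by `t = (t - s) + s`, the part with `s` is handled by the three-term recurrence
`(2n+3) s P_{n+1} = (n+2) P_{n+2} + (n+1) P_n`, and the part with `t - s` by a second integration
by parts, against the continuous function `(t - s) log|t - s|`. The constants come from
`∫ P_k = 0` for `k ≥ 1` and `∫ P_0 = 2`.
-/

open Filter Topology MeasureTheory intervalIntegral

/-- Legendre polynomial of degree `n` (three-term recurrence definition). -/
noncomputable def legendreP : ℕ → ℝ → ℝ
  | 0, _ => 1
  | 1, s => s
  | (n + 2), s =>
      ((2 * (n : ℝ) + 3) * s * legendreP (n + 1) s - ((n : ℝ) + 1) * legendreP n s) / ((n : ℝ) + 2)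

/-- The truncated integral `∫_{-1}^{1} f(s) 1_{|s-t|>ε} ds`, whose limit as `ε → 0⁺`
is the Cauchy principal value `p.v. ∫_{-1}^{1} f(s) ds` (and the ordinary integral
when `f` has no singularity in `[-1,1]`). -/
noncomputable def pvApprox (t : ℝ) (f : ℝ → ℝ) (ε : ℝ) : ℝ :=
  ∫ s in (-1 : ℝ)..1, if |s - t| ≤ ε then 0 else f s

open Real Set
open scoped Interval

section LogKernel

variable {t a b ε : ℝ} {f g g' : ℝ → ℝ}

theorem intervalIntegrable_log_abs_sub_mul (hf : ContinuousOn f [[a, b]]) :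
    IntervalIntegrable (fun s => log |t - s| * f s) volume a b := by
  have h : IntervalIntegrable (fun s => log (t - s)) volume a b := by
    simpa using (intervalIntegrable_log' (a := t - a) (b := t - b)).comp_sub_left t
  simpa only [log_abs] using h.mul_continuousOn hf

theorem abs_log_max_le_abs_log {x : ℝ} (hx : 0 < x) (hε : ε ≤ 1) :
    |log (max x ε)| ≤ |log x| := by
  rcases le_total ε x with h | h
  · rw [max_eq_left h]
  · rw [max_eq_right h, abs_of_nonpos (log_nonpos (hx.le.trans h) hε),
      abs_of_nonpos (log_nonpos hx.le (h.trans hε))]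
    exact neg_le_neg (log_le_log hx h)

theorem continuous_log_max_abs_sub (hε : 0 < ε) : Continuous fun s => log (max |t - s| ε) :=
  continuous_iff_continuousAt.2 fun s => (by fun_prop : Continuous fun s => max |t - s| ε)
    |>.continuousAt.log (lt_max_of_lt_right hε).ne'

theorem tendsto_integral_log_max_abs_sub_mul (hf : ContinuousOn f [[a, b]]) :
    Tendsto (fun ε => ∫ s in a..b, log (max |t - s| ε) * f s) (𝓝[>] 0)
      (𝓝 (∫ s in a..b, log |t - s| * f s)) := by
  refine tendsto_integral_filter_of_dominated_convergence (fun s => ‖log |t - s| * f s‖) ?_ ?_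
    (intervalIntegrable_log_abs_sub_mul hf).norm ?_
  · filter_upwards [self_mem_nhdsWithin] with ε (hε : 0 < ε)
    exact ((continuous_log_max_abs_sub hε).continuousOn.mul (hf.mono uIoc_subset_uIcc))
      |>.aestronglyMeasurable measurableSet_uIoc
  · filter_upwards [Ioo_mem_nhdsGT (zero_lt_one' ℝ)] with ε hε
    filter_upwards [Measure.ae_ne volume t] with s hs _
    rw [norm_mul, norm_mul]
    exact mul_le_mul_of_nonneg_right
      (abs_log_max_le_abs_log (abs_pos.2 (sub_ne_zero.2 hs.symm)) hε.2.le) (norm_nonneg _)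
  · filter_upwards [Measure.ae_ne volume t] with s hs _
    refine tendsto_const_nhds.congr' ?_
    filter_upwards [Ioo_mem_nhdsGT (abs_pos.2 (sub_ne_zero.2 hs.symm))] with ε hε
    rw [max_eq_left hε.2.le]

theorem hasDerivAt_log_abs_sub {s : ℝ} (hs : s ≠ t) :
    HasDerivAt (fun s => log |t - s|) (s - t)⁻¹ s := by
  have h := (hasDerivAt_log (sub_ne_zero.2 hs.symm)).comp s ((hasDerivAt_id s).const_sub t)
  refine (h.congr_deriv ?_).congr_of_eventuallyEq (Eventually.of_forall fun x => log_abs (t - x))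
  rw [← neg_sub t s, inv_neg, mul_neg_one]

theorem hasDerivAt_log_max_abs_sub (hε : 0 ≤ ε) {s : ℝ} (hs : |s - t| ≠ ε) :
    HasDerivAt (fun s => log (max |t - s| ε)) (if |s - t| ≤ ε then 0 else (s - t)⁻¹) s := by
  have hcont : Continuous fun s => |s - t| := by fun_prop
  rcases hs.lt_or_gt with h | h
  · rw [if_pos h.le]
    refine (hasDerivAt_const s (log ε)).congr_of_eventuallyEq ?_
    filter_upwards [hcont.continuousAt.eventually_lt continuousAt_const h] with x hx
    rw [abs_sub_comm, max_eq_right hx.le]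
  · rw [if_neg h.not_ge]
    have hst : s ≠ t := sub_ne_zero.1 (abs_pos.1 (hε.trans_lt h))
    refine (hasDerivAt_log_abs_sub hst).congr_of_eventuallyEq ?_
    filter_upwards [continuousAt_const.eventually_lt hcont.continuousAt h] with x hx
    rw [abs_sub_comm, max_eq_left hx.le]

theorem intervalIntegrable_ite_abs_sub_le_div (hg : Continuous g) (hε : 0 < ε) :
    IntervalIntegrable (fun s => if |s - t| ≤ ε then 0 else g s / (t - s)) volume a b := by
  refine ((hg.intervalIntegrable a b).norm.div_const ε).mono_fun' ?_ (ae_of_all _ fun s => ?_)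
  · exact (Measurable.ite (measurableSet_le (by fun_prop) measurable_const) measurable_const
      (by fun_prop)).aestronglyMeasurable
  · dsimp only
    split_ifs with h
    · rw [norm_zero]
      positivity
    · rw [norm_div, Real.norm_eq_abs (t - s), abs_sub_comm]
      exact div_le_div_of_nonneg_left (norm_nonneg _) hε (not_le.1 h).le

theorem pvApprox_sub_div {p q : ℝ → ℝ} (hp : Continuous p) (hq : Continuous q)
    (hε : 0 < ε) :
    pvApprox t (fun s => p s / (t - s)) ε - pvApprox t (fun s => q s / (t - s)) ε
      = pvApprox t (fun s => (p s - q s) / (t - s)) ε := by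
  rw [pvApprox, pvApprox, pvApprox, ← integral_sub (intervalIntegrable_ite_abs_sub_le_div hp hε)
    (intervalIntegrable_ite_abs_sub_le_div hq hε)]
  congr with s
  split_ifs <;> ring

theorem pvApprox_div_eq_integral_log_max (hg : ∀ s, HasDerivAt g (g' s) s) (hg' : Continuous g')
    (hg_neg_one : g (-1) = 0) (hg_one : g 1 = 0) (hε : 0 < ε) :
    pvApprox t (fun s => g s / (t - s)) ε
      = ∫ s in (-1 : ℝ)..1, log (max |t - s| ε) * g' s := by
  have hgc : Continuous g := continuous_iff_continuousAt.2 fun s => (hg s).continuousAt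
  have hlog := continuous_log_max_abs_sub (t := t) hε
  have hderiv : ∀ s ∉ ({t - ε, t + ε} : Set ℝ),
      HasDerivAt (fun s => -(log (max |t - s| ε) * g s))
        ((if |s - t| ≤ ε then 0 else g s / (t - s)) - log (max |t - s| ε) * g' s) s := by
    intro s hs
    have hsε : |s - t| ≠ ε := by
      simp only [mem_insert_iff, mem_singleton_iff, not_or] at hs
      rw [Ne, abs_eq hε.le]
      rintro (h | h)
      exacts [hs.2 (by linarith), hs.1 (by linarith)]
    refine ((hasDerivAt_log_max_abs_sub hε.le hsε).mul (hg s)).neg.congr_deriv ?_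
    split_ifs with h
    · ring
    · have : t - s ≠ 0 := fun h' => h (by rw [abs_sub_comm, h', abs_zero]; exact hε.le)
      rw [← neg_sub t s, inv_neg]
      field_simp
      ring
  have hint := intervalIntegrable_ite_abs_sub_le_div (t := t) (a := -1) (b := 1) hgc hε
  have hint' : IntervalIntegrable (fun s => log (max |t - s| ε) * g' s) volume (-1) 1 :=
    (hlog.mul hg').intervalIntegrable _ _
  have hftc := integral_eq_of_hasDerivAt_off_countable _ _
    ((countable_singleton (t + ε)).insert (t - ε)) (hlog.mul hgc).neg.continuousOn
    (fun s hs => hderiv s hs.2) (hint.sub hint')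
  rw [integral_sub hint hint'] at hftc
  simpa [pvApprox, hg_neg_one, hg_one, sub_eq_zero] using hftc

theorem tendsto_pvApprox_div (hg : ∀ s, HasDerivAt g (g' s) s) (hg' : Continuous g')
    (hg_neg_one : g (-1) = 0) (hg_one : g 1 = 0) :
    Tendsto (pvApprox t (fun s => g s / (t - s))) (𝓝[>] 0)
      (𝓝 (∫ s in (-1 : ℝ)..1, log |t - s| * g' s)) := by
  refine (tendsto_integral_log_max_abs_sub_mul hg'.continuousOn).congr' ?_
  filter_upwards [self_mem_nhdsWithin] with ε hε
  exact (pvApprox_div_eq_integral_log_max hg hg' hg_neg_one hg_one hε).symm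

theorem integral_log_abs_sub_mul_sub_mul_deriv (hg : ∀ s, HasDerivAt g (g' s) s)
    (hg' : Continuous g') (hga : g a = 0) (hgb : g b = 0) :
    ∫ s in a..b, log |t - s| * ((t - s) * g' s)
      = (∫ s in a..b, log |t - s| * g s) + ∫ s in a..b, g s := by
  have hgc : Continuous g := continuous_iff_continuousAt.2 fun s => (hg s).continuousAt
  have hcont : Continuous fun s => (t - s) * log |t - s| * g s := by
    simp only [log_abs]
    exact (continuous_mul_log.comp (continuous_const.sub continuous_id)).mul hgc
  have hderiv : ∀ s ∉ ({t} : Set ℝ), HasDerivAt (fun s => (t - s) * log |t - s| * g s)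
      (log |t - s| * ((t - s) * g' s) - (log |t - s| * g s + g s)) s := by
    intro s hs
    have hst : t - s ≠ 0 := sub_ne_zero.2 (Ne.symm hs)
    refine ((((hasDerivAt_id s).const_sub t).mul (hasDerivAt_log_abs_sub hs)).mul (hg s))
      |>.congr_deriv ?_
    simp only [Pi.mul_apply, id]
    rw [← neg_sub t s, inv_neg]
    field_simp
    ring
  have hint₁ := intervalIntegrable_log_abs_sub_mul (t := t) (a := a) (b := b)
    (f := fun s => (t - s) * g' s) (by fun_prop)
  have hint₂ := (intervalIntegrable_log_abs_sub_mul (t := t) hgc.continuousOn).add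
    (hgc.intervalIntegrable a b)
  have hftc := integral_eq_of_hasDerivAt_off_countable _ _ (countable_singleton t)
    hcont.continuousOn (fun s hs => hderiv s hs.2) (hint₁.sub hint₂)
  rw [integral_sub hint₁ hint₂,
    integral_add (intervalIntegrable_log_abs_sub_mul hgc.continuousOn) (hgc.intervalIntegrable a b),
    hga, hgb] at hftc
  linarith

end LogKernel

noncomputable def legendrePDeriv : ℕ → ℝ → ℝ
  | 0, _ => 0
  | 1, _ => 1
  | (n + 2), s =>
      ((2 * (n : ℝ) + 3) * (legendreP (n + 1) s + s * legendrePDeriv (n + 1) s)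
        - ((n : ℝ) + 1) * legendrePDeriv n s) / ((n : ℝ) + 2)

theorem legendreP_add_two (n : ℕ) (s : ℝ) :
    ((n : ℝ) + 2) * legendreP (n + 2) s
      = (2 * (n : ℝ) + 3) * s * legendreP (n + 1) s - ((n : ℝ) + 1) * legendreP n s := by
  rw [legendreP]
  field_simp

theorem legendrePDeriv_add_two (n : ℕ) (s : ℝ) :
    ((n : ℝ) + 2) * legendrePDeriv (n + 2) s
      = (2 * (n : ℝ) + 3) * (legendreP (n + 1) s + s * legendrePDeriv (n + 1) s)
        - ((n : ℝ) + 1) * legendrePDeriv n s := by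
  rw [legendrePDeriv]
  field_simp

theorem hasDerivAt_legendreP (n : ℕ) (s : ℝ) :
    HasDerivAt (legendreP n) (legendrePDeriv n s) s := by
  induction n using Nat.twoStepInduction with
  | zero => exact hasDerivAt_const s 1
  | one => exact hasDerivAt_id s
  | more n h₀ h₁ =>
    refine ((((hasDerivAt_id s).const_mul _).mul h₁).sub (h₀.const_mul _)).div_const _
      |>.congr_deriv ?_
    rw [legendrePDeriv, id]
    ring

theorem continuous_legendreP (n : ℕ) : Continuous (legendreP n) :=
  continuous_iff_continuousAt.2 fun s => (hasDerivAt_legendreP n s).continuousAt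

theorem legendreP_one (n : ℕ) : legendreP n 1 = 1 := by
  induction n using Nat.twoStepInduction with
  | zero => rfl
  | one => rfl
  | more n h₀ h₁ =>
    rw [legendreP, h₀, h₁]
    field_simp
    ring

theorem legendreP_neg_one (n : ℕ) : legendreP n (-1) = (-1) ^ n := by
  induction n using Nat.twoStepInduction with
  | zero => rfl
  | one => simp [legendreP]
  | more n h₀ h₁ =>
    rw [legendreP, h₀, h₁]
    field_simp
    ring

theorem legendrePDeriv_add_two_sub (n : ℕ) (s : ℝ) :
    legendrePDeriv (n + 2) s - legendrePDeriv n s = (2 * (n : ℝ) + 3) * legendreP (n + 1) s := by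
  have hderiv : ∀ n : ℕ,
      legendrePDeriv (n + 1) s = ((n : ℝ) + 1) * legendreP n s + s * legendrePDeriv n s ∧
      s * legendrePDeriv (n + 1) s - legendrePDeriv n s
        = ((n : ℝ) + 1) * legendreP (n + 1) s := by
    intro n
    induction n with
    | zero => simp [legendreP, legendrePDeriv]
    | succ n ih =>
      obtain ⟨h₁, h₂⟩ := ih
      have h₃ : legendrePDeriv (n + 2) s
          = ((n : ℝ) + 2) * legendreP (n + 1) s + s * legendrePDeriv (n + 1) s := by
        refine mul_left_cancel₀ (by positivity : (n : ℝ) + 2 ≠ 0) ?_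
        linear_combination legendrePDeriv_add_two n s + ((n : ℝ) + 1) * h₂
      push_cast
      refine ⟨by linear_combination h₃, ?_⟩
      linear_combination s * h₃ + s * h₂ - h₁ - legendreP_add_two n s
  have h₁ := (hderiv (n + 1)).1
  push_cast at h₁
  linear_combination h₁ + (hderiv n).2

theorem hasDerivAt_legendreP_add_two_sub (n : ℕ) (s : ℝ) :
    HasDerivAt (fun s => legendreP (n + 2) s - legendreP n s)
      ((2 * (n : ℝ) + 3) * legendreP (n + 1) s) s := by
  have h := (hasDerivAt_legendreP (n + 2) s).sub (hasDerivAt_legendreP n s)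
  rw [legendrePDeriv_add_two_sub] at h
  exact h

theorem legendreP_add_two_sub_one (n : ℕ) : legendreP (n + 2) 1 - legendreP n 1 = 0 := by
  simp [legendreP_one]

theorem legendreP_add_two_sub_neg_one (n : ℕ) :
    legendreP (n + 2) (-1) - legendreP n (-1) = 0 := by
  simp [legendreP_neg_one, pow_add]

theorem integral_legendreP_succ (n : ℕ) : ∫ s in (-1 : ℝ)..1, legendreP (n + 1) s = 0 := by
  have h := integral_eq_sub_of_hasDerivAt (fun s _ => hasDerivAt_legendreP_add_two_sub n s)
    ((continuous_const.mul (continuous_legendreP (n + 1))).intervalIntegrable (-1) 1)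
  rw [intervalIntegral.integral_const_mul, legendreP_add_two_sub_one,
    legendreP_add_two_sub_neg_one, sub_zero] at h
  exact (mul_eq_zero.1 h).resolve_left (by positivity)

theorem integral_legendreP_zero : ∫ s in (-1 : ℝ)..1, legendreP 0 s = 2 := by
  norm_num [legendreP]

theorem mul_pv_legendreP_add_two_sub {t : ℝ} {C : ℕ → ℝ}
    (hC : ∀ j, Tendsto (pvApprox t (fun s => legendreP j s / (t - s))) (𝓝[>] 0) (𝓝 (C j)))
    (n : ℕ) :
    t * (C (n + 2) - C n)
      = ((n : ℝ) + 3) * (∫ s in (-1 : ℝ)..1, log |t - s| * legendreP (n + 2) s)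
        + n * (∫ s in (-1 : ℝ)..1, log |t - s| * legendreP n s)
        + ((∫ s in (-1 : ℝ)..1, legendreP (n + 2) s)
          - ∫ s in (-1 : ℝ)..1, legendreP n s) := by
  have hP := continuous_legendreP
  have hlog : ∀ {f : ℝ → ℝ}, Continuous f →
      IntervalIntegrable (fun s => log |t - s| * f s) volume (-1) 1 :=
    fun hf => intervalIntegrable_log_abs_sub_mul hf.continuousOn
  have hpv : C (n + 2) - C n
      = ∫ s in (-1 : ℝ)..1, log |t - s| * ((2 * (n : ℝ) + 3) * legendreP (n + 1) s) := by
    refine tendsto_nhds_unique (((hC _).sub (hC n)).congr' ?_)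
      (tendsto_pvApprox_div (hasDerivAt_legendreP_add_two_sub n) (by fun_prop)
        (legendreP_add_two_sub_neg_one n) (legendreP_add_two_sub_one n))
    filter_upwards [self_mem_nhdsWithin] with ε hε
    exact pvApprox_sub_div (hP _) (hP _) hε
  calc t * (C (n + 2) - C n)
      = (∫ s in (-1 : ℝ)..1,
            log |t - s| * ((t - s) * ((2 * (n : ℝ) + 3) * legendreP (n + 1) s)))
        + (((n : ℝ) + 2) * (∫ s in (-1 : ℝ)..1, log |t - s| * legendreP (n + 2) s)
          + ((n : ℝ) + 1) * ∫ s in (-1 : ℝ)..1, log |t - s| * legendreP n s) := by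
        simp only [hpv, ← intervalIntegral.integral_const_mul]
        rw [← integral_add ((hlog (hP _)).const_mul _) ((hlog (hP _)).const_mul _),
          ← integral_add (hlog (by fun_prop)) (((hlog (hP _)).const_mul _).add
            ((hlog (hP _)).const_mul _))]
        refine integral_congr fun s _ => ?_
        linear_combination -log |t - s| * legendreP_add_two n s
    _ = _ := by
        rw [integral_log_abs_sub_mul_sub_mul_deriv (hasDerivAt_legendreP_add_two_sub n)
          (by fun_prop) (legendreP_add_two_sub_neg_one n) (legendreP_add_two_sub_one n)]
        simp_rw [mul_sub]
        rw [integral_sub (hlog (hP _)) (hlog (hP _)),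
          integral_sub ((hP _).intervalIntegrable _ _) ((hP _).intervalIntegrable _ _)]
        ring

theorem log_integral_recursion_general (t : ℝ) (C : ℕ → ℝ)
    (hC : ∀ j : ℕ, Tendsto (pvApprox t (fun s => legendreP j s / (t - s)))
      (nhdsWithin 0 (Set.Ioi 0)) (nhds (C j)))
    (L : ℕ → ℝ) (hL : ∀ j : ℕ, L j = ∫ s in (-1 : ℝ)..1, Real.log |t - s| * legendreP j s) :
    3 * L 2 = t * (C 2 - C 0) + 2 ∧
      ∀ j : ℕ, 2 < j →
        ((j : ℝ) + 1) * L j = -((j : ℝ) - 2) * L (j - 2) + t * (C j - C (j - 2)) := by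
  simp only [hL]
  refine ⟨?_, fun j hj => ?_⟩
  · have h := mul_pv_legendreP_add_two_sub hC 0
    rw [integral_legendreP_succ 1, integral_legendreP_zero] at h
    push_cast at h
    linarith
  · obtain ⟨n, rfl⟩ : ∃ n, j = n + 1 + 2 := ⟨j - 3, by omega⟩
    have h := mul_pv_legendreP_add_two_sub hC (n + 1)
    simp only [integral_legendreP_succ] at h
    simp only [Nat.add_sub_cancel]
    push_cast at h ⊢
    linarith

/-- With `L_j = ∫_{-1}^1 ln|t−s| P_j(s) ds` and `C_j = p.v.∫_{-1}^1 P_j(s)/(t−s) ds`: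
`3·L₂ = t·(C₂ − C₀) + 2`, and for every `j > 2`,
`(j+1)·L_j = −(j−2)·L_{j−2} + t·(C_j − C_{j−2})`. -/
theorem log_integral_recursion (t : ℝ) (ht1 : t ≠ 1) (ht2 : t ≠ -1) (C : ℕ → ℝ)
    (hC : ∀ j : ℕ, Tendsto (pvApprox t (fun s => legendreP j s / (t - s)))
      (nhdsWithin 0 (Set.Ioi 0)) (nhds (C j)))
    (L : ℕ → ℝ) (hL : ∀ j : ℕ, L j = ∫ s in (-1 : ℝ)..1, Real.log |t - s| * legendreP j s) :
    3 * L 2 = t * (C 2 - C 0) + 2 ∧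
      ∀ j : ℕ, 2 < j →
        ((j : ℝ) + 1) * L j = -((j : ℝ) - 2) * L (j - 2) + t * (C j - C (j - 2)) :=
  log_integral_recursion_general t C hC L hL
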